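/- arXiv:2006.02892 — 8 statements merged into one kernel-verified Lean document; each statement's English description precedes it below -/
import Mathlib

section
/- Let R be a commutative ring, let Q(R) be its total ring of fractions, and let T be an R-subalgebra of Q(R). Suppose V is a non-empty subset of T such that T = R[V] and such that fg ∈ R for all f, g ∈ V. Then R is strictly closed in T, i.e. R = {α ∈ T : α ⊗ 1 = 1 ⊗ α in T ⊗_R T}. -/
/-!
Write `W` for the `R`-span of `V`, so that `W * W ≤ R` and hence `T ⊆ R + W`. Splitting
`z ∈ R + W` as `c + w` and sending `(z, y)` to the class of `c * y` in `Q(R) ⧸ R` is a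
well-defined bilinear form: the ambiguity in `c` lies in `R ∩ W`, and `(R ∩ W)(R + W) ⊆ R`.
Pushing `α ⊗ 1 = 1 ⊗ α` through this form gives `0 = α mod R`.
-/

open scoped TensorProduct

namespace Submodule

variable {R A : Type*} [CommRing R] [Ring A] [Algebra R A] {W : Submodule R A}

theorem inf_mul_sup_le_one (hWW : W * W ≤ 1) : (1 ⊓ W) * (1 ⊔ W) ≤ 1 := by
  rw [mul_sup]
  exact sup_le ((mul_le_mul' inf_le_left le_rfl).trans (Submodule.one_mul 1).le)
    ((mul_le_mul' inf_le_right le_rfl).trans hWW)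

theorem one_sup_mul_self_le (hWW : W * W ≤ 1) : (1 ⊔ W) * (1 ⊔ W) ≤ 1 ⊔ W := by
  rw [mul_sup, sup_mul, sup_mul, Submodule.one_mul, Submodule.one_mul, mul_one]
  exact sup_le (sup_le le_sup_left le_sup_right) (sup_le le_sup_right (hWW.trans le_sup_left))

theorem toSubmodule_adjoin_le_one_sup (hWW : W * W ≤ 1) {s : Set A} (hs : s ⊆ W) :
    Subalgebra.toSubmodule (Algebra.adjoin R s) ≤ 1 ⊔ W := by
  let S : Subalgebra R A := (1 ⊔ W).toSubalgebra (one_le.mp le_sup_left)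
    fun _ _ hx hy ↦ one_sup_mul_self_le hWW (mul_mem_mul hx hy)
  exact Algebra.adjoin_le (S := S) fun _ hx ↦ (le_sup_right : W ≤ 1 ⊔ W) (hs hx)

variable (N : Submodule R A) in
def mulModOne : A →ₗ[R] N →ₗ[R] A ⧸ (1 : Submodule R A) :=
  ((LinearMap.mul R A).compr₂ (1 : Submodule R A).mkQ).compl₂ N.subtype

theorem mulModOne_eq_zero_of_mem_inf (hWW : W * W ≤ 1) {c : A} (hc : c ∈ 1 ⊓ W) :
    mulModOne (1 ⊔ W) c = 0 := by
  ext y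
  exact (Quotient.mk_eq_zero _).mpr (inf_mul_sup_le_one hWW (mul_mem_mul hc y.2))

noncomputable def residueForm (hWW : W * W ≤ 1) :
    ↥(1 ⊔ W) →ₗ[R] ↥(1 ⊔ W) →ₗ[R] A ⧸ (1 : Submodule R A) :=
  (((mulModOne (1 ⊔ W)).toPMap 1).sup (LinearMap.toPMap 0 W) fun c w hcw ↦
    mulModOne_eq_zero_of_mem_inf hWW (c := c) ⟨c.2, hcw ▸ w.2⟩).toFun

theorem residueForm_apply (hWW : W * W ≤ 1) {c w : A} (hc : c ∈ (1 : Submodule R A))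
    (hw : w ∈ W) (z y : ↥(1 ⊔ W)) (hz : c + w = z) :
    residueForm hWW z y = (1 : Submodule R A).mkQ (c * y) := by
  let f := (mulModOne (1 ⊔ W)).toPMap 1
  let g := LinearMap.toPMap (0 : A →ₗ[R] ↥(1 ⊔ W) →ₗ[R] A ⧸ (1 : Submodule R A)) W
  refine (LinearMap.congr_fun (LinearPMap.sup_apply (f := f) (g := g) (fun c w hcw ↦
    mulModOne_eq_zero_of_mem_inf hWW (c := c) ⟨c.2, hcw ▸ w.2⟩) ⟨c, hc⟩ ⟨w, hw⟩ z hz) y).trans ?_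
  exact add_zero ((1 : Submodule R A).mkQ (c * y))

end Submodule

namespace Subalgebra

open Submodule

variable {R A : Type*} [CommRing R] [Ring A] [Algebra R A]

theorem mem_range_algebraMap_of_tmul_one_eq_one_tmul {T : Subalgebra R A} {W : Submodule R A}
    (hWW : W * W ≤ 1) (hT : toSubmodule T ≤ 1 ⊔ W) {α : T}
    (hα : α ⊗ₜ[R] (1 : T) = 1 ⊗ₜ α) : α ∈ (algebraMap R T).range := by
  let ι : T →ₗ[R] ↥(1 ⊔ W) := T.val.toLinearMap.codRestrict _ fun x ↦ hT x.2
  have hres := congr(TensorProduct.lift ((residueForm hWW).compl₁₂ ι ι) $hα)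
  simp only [TensorProduct.lift.tmul, LinearMap.compl₁₂_apply] at hres
  obtain ⟨c, hc, w, hw, hcw⟩ := mem_sup.mp (hT α.2)
  rw [residueForm_apply hWW hc hw _ _ hcw,
    residueForm_apply hWW (algebraMap_mem 1) W.zero_mem _ _ (by simp [ι])] at hres
  have hα1 : (α : A) ∈ (1 : Submodule R A) := by
    simpa [ι] using sub_mem hc ((Submodule.Quotient.eq _).mp hres)
  obtain ⟨r, hr⟩ := mem_one.mp hα1
  exact ⟨r, Subtype.ext hr⟩

end Subalgebra

set_option synthInstance.maxHeartbeats 1000000 in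
theorem strictly_closed_of_products_in_base_general
    (R : Type*) [CommRing R] (T : Subalgebra R (FractionRing R))
    (V : Set (FractionRing R))
    (hgen : T = Algebra.adjoin R V)
    (hmul : ∀ f ∈ V, ∀ g ∈ V, f * g ∈ (algebraMap R (FractionRing R)).range) :
    ∀ α : T, α ⊗ₜ[R] (1 : T) = (1 : T) ⊗ₜ[R] α → α ∈ (algebraMap R T).range := by
  have hVV : Submodule.span R V * Submodule.span R V ≤ 1 := by
    rw [Submodule.span_mul_span, Submodule.span_le]
    rintro _ ⟨f, hf, g, hg, rfl⟩
    exact Submodule.mem_one.mpr (hmul f hf g hg)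
  subst hgen
  exact fun _ ↦ Subalgebra.mem_range_algebraMap_of_tmul_one_eq_one_tmul hVV
    (Submodule.toSubmodule_adjoin_le_one_sup hVV Submodule.subset_span)

set_option synthInstance.maxHeartbeats 1000000 in
/-- Let `R` be a commutative ring, `Q(R)` its total ring of fractions
(`FractionRing R`), and `T` an `R`-subalgebra of `Q(R)`. If `V ⊆ T` is a non-empty subset
with `T = R[V]` and `fg ∈ R` for all `f, g ∈ V`, then `R` is strictly closed in `T`, i.e.
every `α ∈ T` with `α ⊗ 1 = 1 ⊗ α` in `T ⊗_R T` comes from `R`. -/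
theorem strictly_closed_of_products_in_base
    (R : Type*) [CommRing R] (T : Subalgebra R (FractionRing R))
    (V : Set (FractionRing R)) (hVne : V.Nonempty)
    (hVT : (V : Set (FractionRing R)) ⊆ (T : Set (FractionRing R)))
    (hgen : T = Algebra.adjoin R V)
    (hmul : ∀ f ∈ V, ∀ g ∈ V, f * g ∈ (algebraMap R (FractionRing R)).range) :
    ∀ α : T, α ⊗ₜ[R] (1 : T) = (1 : T) ⊗ₜ[R] α → α ∈ (algebraMap R T).range :=
  strictly_closed_of_products_in_base_general R T V hgen hmul
end

section
/- Let R be a commutative ring and let T = R[f1, f2, ..., fn] be an R-subalgebra of the total ring of fractions Q(R), where f_i f_j ∈ R for all 1 ≤ i, j ≤ n. If a0, a1, ..., an ∈ R satisfy a0 + a1·f1 + ... + an·fn = 0 in T, then a0·T ⊆ R, i.e. a0 lies in the conductor ideal R : T = {x ∈ T : x·T ⊆ R}. -/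
/-- Let `R` be a commutative ring and `T = R[f₁, …, fₙ]` an `R`-subalgebra of
the total ring of fractions `Q(R)`, where `fᵢfⱼ ∈ R` for all `i, j`. If `a₀, a₁, …, aₙ ∈ R`
satisfy `a₀ + a₁f₁ + ⋯ + aₙfₙ = 0` in `T`, then `a₀ · T ⊆ R`, i.e. `a₀` lies in the conductor
`R : T`. -/
theorem conductor_mem_of_relation
    (R : Type*) [CommRing R] (n : ℕ) (f : Fin n → FractionRing R)
    (hmul : ∀ i j, f i * f j ∈ (algebraMap R (FractionRing R)).range)
    (a₀ : R) (a : Fin n → R)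
    (hrel : algebraMap R (FractionRing R) a₀
        + ∑ i, algebraMap R (FractionRing R) (a i) * f i = 0) :
    ∀ x ∈ Algebra.adjoin R (Set.range f),
      algebraMap R (FractionRing R) a₀ * x ∈ (algebraMap R (FractionRing R)).range := by
  let φ := algebraMap R (FractionRing R)
  let M : Submodule R (FractionRing R) := Submodule.span R (insert 1 (Set.range f))
  have hrange_le : ∀ r : R, φ r ∈ M := by
    intro r
    have h1 : (1 : FractionRing R) ∈ M := Submodule.subset_span (Set.mem_insert _ _)
    have := M.smul_mem r h1
    rwa [Algebra.smul_def, mul_one] at this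
  have hmulM : ∀ x ∈ M, ∀ y ∈ M, x * y ∈ M := by
    intro x hx y hy
    induction hx using Submodule.span_induction with
    | mem z hz =>
      induction hy using Submodule.span_induction with
      | mem w hw =>
        rcases hz with rfl | ⟨i, rfl⟩
        · rcases hw with rfl | ⟨j, rfl⟩
          · simpa using hrange_le 1
          · rw [one_mul]; exact Submodule.subset_span (Set.mem_insert_of_mem _ ⟨j, rfl⟩)
        · rcases hw with rfl | ⟨j, rfl⟩
          · rw [mul_one]; exact Submodule.subset_span (Set.mem_insert_of_mem _ ⟨i, rfl⟩)
          · obtain ⟨r, hr⟩ := hmul i j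
            rw [← hr]; exact hrange_le r
      | zero => simp
      | add w₁ w₂ _ _ h1 h2 => rw [mul_add]; exact M.add_mem h1 h2
      | smul r w _ h => rw [mul_smul_comm]; exact M.smul_mem r h
    | zero => simp
    | add z₁ z₂ _ _ h1 h2 => rw [add_mul]; exact M.add_mem h1 h2
    | smul r z _ h => rw [smul_mul_assoc]; exact M.smul_mem r h
  have hadj : ∀ x ∈ Algebra.adjoin R (Set.range f), x ∈ M := by
    intro x hx
    induction hx using Algebra.adjoin_induction with
    | mem z hz => exact Submodule.subset_span (Set.mem_insert_of_mem _ hz)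
    | algebraMap r => exact hrange_le r
    | add _ _ _ _ h1 h2 => exact M.add_mem h1 h2
    | mul _ _ _ _ h1 h2 => exact hmulM _ h1 _ h2
  have ha₀f : ∀ j, φ a₀ * f j ∈ φ.range := by
    intro j
    have ha₀ : φ a₀ = -∑ i, φ (a i) * f i := eq_neg_of_add_eq_zero_left hrel
    rw [ha₀, neg_mul, Finset.sum_mul]
    refine neg_mem (sum_mem fun i _ => ?_)
    obtain ⟨r, hr⟩ := hmul i j
    exact ⟨a i * r, by rw [map_mul, hr]; ring⟩
  intro x hx
  have hxM := hadj x hx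
  clear hx
  induction hxM using Submodule.span_induction with
  | mem z hz =>
    rcases hz with rfl | ⟨i, rfl⟩
    · exact ⟨a₀, by rw [mul_one]⟩
    · exact ha₀f i
  | zero => exact ⟨0, by simp⟩
  | add z₁ z₂ _ _ h1 h2 => rw [mul_add]; exact add_mem h1 h2
  | smul r z _ h =>
    rw [mul_smul_comm, Algebra.smul_def]
    exact mul_mem ⟨r, rfl⟩ h
end

section
/- Let R be a commutative ring and suppose that the integral closure R̄ of R in its total ring of fractions Q(R) satisfies R̄ = R[f] for some f ∈ Q(R) with f² ∈ R. Then R is strictly closed (i.e., strictly closed in R̄), and consequently R is a weakly Arf ring. -/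
open scoped TensorProduct

/-- `R` is a weakly Arf ring: whenever `x` is a non-zerodivisor of `R` and `y/x`, `z/x` lie in
the integral closure `R̄` of `R` in its total ring of fractions `Q(R)`, one has `yz/x ∈ R`. -/
def IsWeaklyArf (R : Type*) [CommRing R] : Prop :=
  ∀ x y z : R, x ∈ nonZeroDivisors R →
    (∃ u ∈ integralClosure R (FractionRing R),
        u * algebraMap R (FractionRing R) x = algebraMap R (FractionRing R) y) →
    (∃ v ∈ integralClosure R (FractionRing R),
        v * algebraMap R (FractionRing R) x = algebraMap R (FractionRing R) z) →
    ∃ r : R, algebraMap R (FractionRing R) r * algebraMap R (FractionRing R) x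
        = algebraMap R (FractionRing R) (y * z)

/-- `R` is strictly closed in the `R`-algebra `S`: `R = {α ∈ S ∣ α ⊗ 1 = 1 ⊗ α in S ⊗_R S}`. -/
def IsStrictlyClosedIn (R S : Type*) [CommRing R] [CommRing S] [Algebra R S] : Prop :=
  ∀ s : S, s ⊗ₜ[R] (1 : S) = (1 : S) ⊗ₜ[R] s → s ∈ (algebraMap R S).range

/-- `R` is strictly closed, i.e. strictly closed in the integral closure `R̄` of `R` in its
total ring of fractions `Q(R)`. -/
def IsStrictlyClosed (R : Type*) [CommRing R] : Prop :=
  IsStrictlyClosedIn R (integralClosure R (FractionRing R))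

/-- Auxiliary: if `S = R·1 + R·g` with `g² ∈ R·1`, then `R` is strictly closed in `S`. -/
private lemma aux_strictlyClosedIn {R S : Type*} [CommRing R] [CommRing S] [Algebra R S]
    (g : S) (k : R) (hk : algebraMap R S k = g * g)
    (hrep : ∀ x : S, ∃ a b : R, x = algebraMap R S a + algebraMap R S b * g) :
    IsStrictlyClosedIn R S := by
  classical
  choose A B hAB using hrep
  set J : Ideal R := Submodule.comap (LinearMap.toSpanSingleton R S g)
      (LinearMap.range (Algebra.linearMap R S)) with hJdef
  have hmemJ : ∀ b : R, b ∈ J ↔ ∃ r : R, algebraMap R S r = algebraMap R S b * g := by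
    intro b
    simp [hJdef, LinearMap.toSpanSingleton_apply, Algebra.smul_def, Algebra.linearMap_apply]
  have welldef1 : ∀ a b a' b' c : R,
      algebraMap R S a + algebraMap R S b * g = algebraMap R S a' + algebraMap R S b' * g →
      Ideal.Quotient.mk J (b * c) = Ideal.Quotient.mk J (b' * c) := by
    intro a b a' b' c h
    rw [Ideal.Quotient.mk_eq_mk_iff_sub_mem]
    have hbb : b - b' ∈ J := by
      rw [hmemJ]
      exact ⟨a' - a, by rw [map_sub, map_sub]; linear_combination -h⟩
    have e : b * c - b' * c = (b - b') * c := by ring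
    rw [e]
    exact J.mul_mem_right c hbb
  have welldef2 : ∀ b c d c' d' : R,
      algebraMap R S c + algebraMap R S d * g = algebraMap R S c' + algebraMap R S d' * g →
      Ideal.Quotient.mk J (b * c) = Ideal.Quotient.mk J (b * c') := by
    intro b c d c' d' h
    rw [Ideal.Quotient.mk_eq_mk_iff_sub_mem]
    have hcc : c - c' ∈ J := by
      rw [hmemJ]
      refine ⟨(d' - d) * k, ?_⟩
      rw [map_mul, map_sub, map_sub]
      linear_combination (algebraMap R S d' - algebraMap R S d) * hk - g * h
    have e : b * c - b * c' = b * (c - c') := by ring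
    rw [e]
    exact J.mul_mem_left b hcc
  have hsmulmk : ∀ (r m : R), r • (Ideal.Quotient.mk J m) = Ideal.Quotient.mk J (r * m) := by
    intro r m; simp [Algebra.smul_def, ← map_mul]
  have key1 : ∀ (x y : S) (a b : R), x = algebraMap R S a + algebraMap R S b * g →
      Ideal.Quotient.mk J (B x * A y) = Ideal.Quotient.mk J (b * A y) := by
    intro x y a b hx
    exact welldef1 (A x) (B x) a b (A y) (by rw [← hAB x, ← hx])
  have key2 : ∀ (x y : S) (c d : R), y = algebraMap R S c + algebraMap R S d * g →
      Ideal.Quotient.mk J (B x * A y) = Ideal.Quotient.mk J (B x * c) := by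
    intro x y c d hy
    exact welldef2 (B x) (A y) (B y) c d (by rw [← hAB y, ← hy])
  let Bl : S →ₗ[R] S →ₗ[R] R ⧸ J := LinearMap.mk₂ R
    (fun x y => Ideal.Quotient.mk J (B x * A y))
    (by
      intro x x' y
      show Ideal.Quotient.mk J (B (x + x') * A y)
        = Ideal.Quotient.mk J (B x * A y) + Ideal.Quotient.mk J (B x' * A y)
      have hx : x + x' = algebraMap R S (A x + A x') + algebraMap R S (B x + B x') * g := by
        rw [map_add, map_add]; linear_combination hAB x + hAB x'
      rw [key1 (x + x') y _ _ hx, add_mul, map_add])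
    (by
      intro r x y
      show Ideal.Quotient.mk J (B (r • x) * A y) = r • Ideal.Quotient.mk J (B x * A y)
      have hx : r • x = algebraMap R S (r * A x) + algebraMap R S (r * B x) * g := by
        rw [Algebra.smul_def, map_mul, map_mul]
        linear_combination algebraMap R S r * hAB x
      rw [key1 (r • x) y _ _ hx, hsmulmk]
      congr 1; ring)
    (by
      intro x y y'
      show Ideal.Quotient.mk J (B x * A (y + y'))
        = Ideal.Quotient.mk J (B x * A y) + Ideal.Quotient.mk J (B x * A y')
      have hy : y + y' = algebraMap R S (A y + A y') + algebraMap R S (B y + B y') * g := by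
        rw [map_add, map_add]; linear_combination hAB y + hAB y'
      rw [key2 x (y + y') _ _ hy, mul_add, map_add])
    (by
      intro r x y
      show Ideal.Quotient.mk J (B x * A (r • y)) = r • Ideal.Quotient.mk J (B x * A y)
      have hy : r • y = algebraMap R S (r * A y) + algebraMap R S (r * B y) * g := by
        rw [Algebra.smul_def, map_mul, map_mul]
        linear_combination algebraMap R S r * hAB y
      rw [key2 x (r • y) _ _ hy, hsmulmk]
      congr 1; ring)
  intro s hs
  have hL : TensorProduct.lift Bl (s ⊗ₜ[R] (1 : S)) = TensorProduct.lift Bl ((1 : S) ⊗ₜ[R] s) :=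
    by rw [hs]
  rw [TensorProduct.lift.tmul, TensorProduct.lift.tmul] at hL
  have hLs : Ideal.Quotient.mk J (B s * A 1) = Ideal.Quotient.mk J (B 1 * A s) := hL
  have h1rep : (1 : S) = algebraMap R S 1 + algebraMap R S 0 * g := by simp
  have e1 : Ideal.Quotient.mk J (B s * A 1) = Ideal.Quotient.mk J (B s * 1) :=
    key2 s 1 1 0 h1rep
  have e2 : Ideal.Quotient.mk J (B 1 * A s) = Ideal.Quotient.mk J (0 * A s) :=
    welldef1 (A 1) (B 1) 1 0 (A s) (by rw [← hAB 1, ← h1rep])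
  have hBs : B s ∈ J := by
    rw [← Ideal.Quotient.eq_zero_iff_mem]
    calc Ideal.Quotient.mk J (B s) = Ideal.Quotient.mk J (B s * 1) := by rw [mul_one]
    _ = Ideal.Quotient.mk J (B s * A 1) := e1.symm
    _ = Ideal.Quotient.mk J (B 1 * A s) := hLs
    _ = Ideal.Quotient.mk J (0 * A s) := e2
    _ = 0 := by rw [zero_mul, map_zero]
  obtain ⟨r, hr⟩ := (hmemJ (B s)).1 hBs
  exact ⟨A s + r, by rw [map_add, hr, ← hAB s]⟩

set_option maxHeartbeats 2000000 in
set_option synthInstance.maxHeartbeats 400000 in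
/-- If the integral closure `R̄` of `R` in its total ring of fractions
satisfies `R̄ = R[f]` for some `f ∈ Q(R)` with `f² ∈ R`, then `R` is strictly closed, and
consequently `R` is a weakly Arf ring. -/
theorem isStrictlyClosed_of_adjoin_single
    (R : Type*) [CommRing R] (f : FractionRing R)
    (hgen : integralClosure R (FractionRing R) = Algebra.adjoin R {f})
    (hsq : f ^ 2 ∈ (algebraMap R (FractionRing R)).range) :
    IsStrictlyClosed R ∧ IsWeaklyArf R := by
  obtain ⟨k, hk⟩ := hsq
  have hfint : f ∈ integralClosure R (FractionRing R) := by
    rw [hgen]; exact Algebra.self_mem_adjoin_singleton R f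
  have hkS : algebraMap R (integralClosure R (FractionRing R)) k
      = (⟨f, hfint⟩ : integralClosure R (FractionRing R))
        * (⟨f, hfint⟩ : integralClosure R (FractionRing R)) := by
    apply Subtype.ext
    push_cast
    rw [hk]
    ring
  have hrepQ : ∀ q ∈ Algebra.adjoin R {f}, ∃ a b : R,
      q = algebraMap R (FractionRing R) a + algebraMap R (FractionRing R) b * f := by
    intro q hq
    induction hq using Algebra.adjoin_induction with
    | mem x hx =>
        rw [Set.mem_singleton_iff] at hx
        exact ⟨0, 1, by simp [hx]⟩
    | algebraMap r => exact ⟨r, 0, by simp⟩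
    | add x y hx hy ihx ihy =>
        obtain ⟨a, b, rfl⟩ := ihx
        obtain ⟨c, d, rfl⟩ := ihy
        exact ⟨a + c, b + d, by rw [map_add, map_add]; ring⟩
    | mul x y hx hy ihx ihy =>
        obtain ⟨a, b, rfl⟩ := ihx
        obtain ⟨c, d, rfl⟩ := ihy
        refine ⟨a * c + b * d * k, a * d + b * c, ?_⟩
        rw [map_add, map_mul, map_mul, map_mul, map_add, map_mul, map_mul]
        linear_combination (-(algebraMap R (FractionRing R) b * algebraMap R (FractionRing R) d)) *
          (hk.trans (sq f))
  have hrepS : ∀ x : integralClosure R (FractionRing R), ∃ a b : R,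
      x = algebraMap R (integralClosure R (FractionRing R)) a
        + algebraMap R (integralClosure R (FractionRing R)) b
          * (⟨f, hfint⟩ : integralClosure R (FractionRing R)) := by
    intro x
    obtain ⟨a, b, hab⟩ := hrepQ (x : FractionRing R) (by rw [← hgen]; exact x.2)
    refine ⟨a, b, Subtype.ext ?_⟩
    push_cast
    exact hab
  have hSC : IsStrictlyClosed R :=
    aux_strictlyClosedIn (⟨f, hfint⟩ : integralClosure R (FractionRing R)) k hkS hrepS
  refine ⟨hSC, ?_⟩
  rintro x y z hx ⟨u, hu, huxy⟩ ⟨v, hv, hvxz⟩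
  set uS : integralClosure R (FractionRing R) := ⟨u, hu⟩ with huS
  set vS : integralClosure R (FractionRing R) := ⟨v, hv⟩ with hvS
  have hy : uS * algebraMap R (integralClosure R (FractionRing R)) x
      = algebraMap R (integralClosure R (FractionRing R)) y := by
    apply Subtype.ext
    push_cast
    exact huxy
  have hz : vS * algebraMap R (integralClosure R (FractionRing R)) x
      = algebraMap R (integralClosure R (FractionRing R)) z := by
    apply Subtype.ext
    push_cast
    exact hvxz
  have ht : (uS * vS * algebraMap R (integralClosure R (FractionRing R)) x)
        ⊗ₜ[R] (1 : integralClosure R (FractionRing R))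
      = (1 : integralClosure R (FractionRing R))
        ⊗ₜ[R] (uS * vS * algebraMap R (integralClosure R (FractionRing R)) x) := by
    have e1 : uS * vS * algebraMap R (integralClosure R (FractionRing R)) x = y • vS := by
      rw [Algebra.smul_def, ← hy]; ring
    have e2 : y • (1 : integralClosure R (FractionRing R))
        = uS * algebraMap R (integralClosure R (FractionRing R)) x := by
      rw [Algebra.smul_def, mul_one, ← hy]
    have e3 : uS * algebraMap R (integralClosure R (FractionRing R)) x = x • uS := by
      rw [Algebra.smul_def]; ring
    have e4 : x • vS = vS * algebraMap R (integralClosure R (FractionRing R)) x := by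
      rw [Algebra.smul_def]; ring
    calc (uS * vS * algebraMap R (integralClosure R (FractionRing R)) x)
          ⊗ₜ[R] (1 : integralClosure R (FractionRing R))
        = (y • vS) ⊗ₜ[R] (1 : integralClosure R (FractionRing R)) := by rw [e1]
    _ = vS ⊗ₜ[R] (y • (1 : integralClosure R (FractionRing R))) :=
        TensorProduct.smul_tmul y vS 1
    _ = vS ⊗ₜ[R] (x • uS) := by rw [e2, e3]
    _ = (x • vS) ⊗ₜ[R] uS := (TensorProduct.smul_tmul x vS uS).symm
    _ = (z • (1 : integralClosure R (FractionRing R))) ⊗ₜ[R] uS := by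
        rw [e4, hz, Algebra.smul_def, mul_one]
    _ = (1 : integralClosure R (FractionRing R)) ⊗ₜ[R] (z • uS) :=
        TensorProduct.smul_tmul z 1 uS
    _ = (1 : integralClosure R (FractionRing R))
          ⊗ₜ[R] (uS * vS * algebraMap R (integralClosure R (FractionRing R)) x) := by
        rw [Algebra.smul_def, ← hz]
        congr 1
        ring
  obtain ⟨r, hr⟩ := hSC _ ht
  have hrQ : algebraMap R (FractionRing R) r = u * v * algebraMap R (FractionRing R) x := by
    have h2 := congrArg (Subtype.val : integralClosure R (FractionRing R) → FractionRing R) hr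
    push_cast at h2
    exact h2
  refine ⟨r, ?_⟩
  rw [map_mul, ← huxy, ← hvxz]
  linear_combination (algebraMap R (FractionRing R) x) * hrQ
end

section
/- Let R be a commutative ring and let J = (a1, a2, ..., an) with n ≥ 3 be an ideal of R such that a1² = a2·a3. Set I = (a2, a3, ..., an) and assume I contains a non-zerodivisor of R. Let t be an indeterminate and consider the Rees algebras 𝓡 = R[It] ⊆ 𝓣 = R[Jt] inside the polynomial ring R[t]. Then 𝓡 is strictly closed in 𝓣. -/
open scoped TensorProduct

/-- The Rees algebra `R[It]` of an ideal `I`: the `R`-subalgebra of the polynomial ring `R[t]`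
generated by the elements `a·t` with `a ∈ I`. -/
noncomputable def ReesAlg {R : Type*} [CommRing R] (I : Ideal R) : Subalgebra R (Polynomial R) :=
  Algebra.adjoin R ((fun a => Polynomial.C a * Polynomial.X) '' (I : Set R))

open Polynomial in

set_option maxHeartbeats 1000000 in
set_option synthInstance.maxHeartbeats 200000 in
theorem strict_aux {R : Type*} [CommRing R] {A B : Subalgebra R (Polynomial R)}
    [inst : Algebra ↥A ↥B]
    (hsmul : ∀ (γ : ↥A) (β : ↥B),
      ((algebraMap ↥A ↥B γ * β : ↥B) : Polynomial R) = (γ : Polynomial R) * (β : Polynomial R))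
    {x : Polynomial R} (hx2 : x * x ∈ A)
    (hdec : ∀ β : ↥B, ∃ r s : Polynomial R, r ∈ A ∧ s ∈ A ∧ (β : Polynomial R) = r + s * x)
    (α : ↥B) (hα : α ⊗ₜ[↥A] (1 : ↥B) = (1 : ↥B) ⊗ₜ[↥A] α) : (α : Polynomial R) ∈ A := by
  classical
  have hsmul' : ∀ (γ : ↥A) (β : ↥B),
      ((γ • β : ↥B) : Polynomial R) = (γ : Polynomial R) * (β : Polynomial R) := by
    intro γ β
    rw [Algebra.smul_def, hsmul]
  have hAsmul : ∀ (γ : ↥A) (v : Polynomial R), γ • v = (γ : Polynomial R) * v := fun γ v => rfl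
  let N : Submodule ↥A (Polynomial R) :=
    { carrier := A
      add_mem' := fun h1 h2 => add_mem h1 h2
      zero_mem' := zero_mem _
      smul_mem' := fun c p hp => by
        show (c • p) ∈ A
        rw [hAsmul]
        exact mul_mem c.2 hp }
  have hNmem : ∀ v : Polynomial R, v ∈ A → v ∈ N := fun v hv => hv
  choose rr ss hrr hss hdd using hdec
  set π := N.mkQ with hπ
  have key : ∀ (α β : ↥B) (r s : Polynomial R), r ∈ A → s ∈ A → (β : Polynomial R) = r + s * x →
      π ((α : Polynomial R) * rr β) = π ((α : Polynomial R) * r) := by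
    intro α β r s hr hs hβ
    rw [hπ, Submodule.mkQ_apply, Submodule.mkQ_apply, Submodule.Quotient.eq]
    have h1 : rr β - r = (s - ss β) * x := by linear_combination hβ - hdd β
    have h2 : (α : Polynomial R) * rr β - (α : Polynomial R) * r
        = rr α * (rr β - r) + ss α * (s - ss β) * (x * x) := by
      linear_combination (rr β - r) * hdd α + ss α * x * h1
    rw [h2]
    exact hNmem _ (add_mem (mul_mem (hrr α) (sub_mem (hrr β) hr))
      (mul_mem (mul_mem (hss α) (sub_mem hs (hss β))) hx2))
  let F : ↥B →ₗ[↥A] ↥B →ₗ[↥A] (Polynomial R ⧸ N) :=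
    { toFun := fun α =>
      { toFun := fun β => π ((α : Polynomial R) * rr β)
        map_add' := fun β β' => by
          show π ((α : Polynomial R) * rr (β + β')) = π ((α : Polynomial R) * rr β) + π ((α : Polynomial R) * rr β')
          have h := key α (β + β') (rr β + rr β') (ss β + ss β')
            (add_mem (hrr β) (hrr β')) (add_mem (hss β) (hss β'))
            (by push_cast [hdd β, hdd β']; ring)
          rw [h, mul_add, map_add]
        map_smul' := fun γ β => by
          show π ((α : Polynomial R) * rr (γ • β)) = γ • π ((α : Polynomial R) * rr β)
          have h := key α (γ • β) ((γ : Polynomial R) * rr β) ((γ : Polynomial R) * ss β)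
            (mul_mem γ.2 (hrr β)) (mul_mem γ.2 (hss β))
            (by rw [hsmul', hdd β]; ring)
          rw [h]
          have h3 : (α : Polynomial R) * ((γ : Polynomial R) * rr β)
              = γ • ((α : Polynomial R) * rr β) := by rw [hAsmul]; ring
          rw [h3, map_smul] }
      map_add' := fun α α' => LinearMap.ext fun β => by
        show π ((((α + α') : ↥B) : Polynomial R) * rr β)
          = π ((α : Polynomial R) * rr β) + π ((α' : Polynomial R) * rr β)
        push_cast
        rw [add_mul, map_add]
      map_smul' := fun γ α => LinearMap.ext fun β => by
        show π (((γ • α : ↥B) : Polynomial R) * rr β) = γ • π ((α : Polynomial R) * rr β)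
        rw [hsmul']
        have h3 : (γ : Polynomial R) * (α : Polynomial R) * rr β
            = γ • ((α : Polynomial R) * rr β) := by rw [hAsmul]; ring
        rw [h3, map_smul] }
  have h1 : TensorProduct.lift F (α ⊗ₜ[↥A] (1 : ↥B)) = TensorProduct.lift F ((1 : ↥B) ⊗ₜ[↥A] α) := by
    rw [hα]
  rw [TensorProduct.lift.tmul, TensorProduct.lift.tmul] at h1
  have e1 : π ((α : Polynomial R) * rr 1) = π ((α : Polynomial R) * 1) :=
    key α 1 1 0 (one_mem A) (zero_mem A) (by push_cast; ring)
  have e2 : π (((1 : ↥B) : Polynomial R) * rr α) = 0 := by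
    rw [OneMemClass.coe_one, one_mul, hπ, Submodule.mkQ_apply, Submodule.Quotient.mk_eq_zero]
    exact hNmem _ (hrr α)
  have hz : π ((α : Polynomial R)) = 0 := by
    have h4 := h1
    simp only [F, LinearMap.coe_mk, AddHom.coe_mk] at h4
    rw [e1, e2, mul_one] at h4
    exact h4
  rw [hπ, Submodule.mkQ_apply, Submodule.Quotient.mk_eq_zero] at hz
  exact hz

open Polynomial in
theorem rees_x2 {R : Type*} [CommRing R] (n : ℕ) (hn : 3 ≤ n) (a : ℕ → R)
    (hsq : a 1 ^ 2 = a 2 * a 3) :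
    (C (a 1) * X) * (C (a 1) * X) ∈ Algebra.adjoin R
      ((fun a => C a * X) '' ((Ideal.span (a '' Set.Icc 2 n) : Ideal R) : Set R)) := by
  have ha2 : a 2 ∈ Ideal.span (a '' Set.Icc 2 n) :=
    Ideal.subset_span ⟨2, ⟨le_refl 2, by omega⟩, rfl⟩
  have ha3 : a 3 ∈ Ideal.span (a '' Set.Icc 2 n) :=
    Ideal.subset_span ⟨3, ⟨by omega, by omega⟩, rfl⟩
  have hC : C (a 1) * C (a 1) = C (a 2) * C (a 3) := by
    rw [← C_mul, ← C_mul]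
    congr 1
    linear_combination hsq
  have hxx : (C (a 1) * X) * (C (a 1) * X) = (C (a 2) * X) * (C (a 3) * X) := by
    linear_combination (X * X : Polynomial R) * hC
  rw [hxx]
  exact mul_mem (Algebra.subset_adjoin ⟨a 2, ha2, rfl⟩) (Algebra.subset_adjoin ⟨a 3, ha3, rfl⟩)

open Polynomial in
section
variable {R : Type*} [CommRing R]

theorem mem_reesAlg_of_mem {I : Ideal R} {b : R} (hb : b ∈ I) :
    C b * X ∈ Algebra.adjoin R ((fun a => C a * X) '' (I : Set R)) :=
  Algebra.subset_adjoin ⟨b, hb, rfl⟩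

theorem rees_dec (n : ℕ) (hn : 3 ≤ n) (a : ℕ → R) (hsq : a 1 ^ 2 = a 2 * a 3) :
    ∀ β : Polynomial R, β ∈ Algebra.adjoin R
        ((fun a => C a * X) '' ((Ideal.span (a '' Set.Icc 1 n) : Ideal R) : Set R)) →
      ∃ r s : Polynomial R,
        r ∈ Algebra.adjoin R ((fun a => C a * X) '' ((Ideal.span (a '' Set.Icc 2 n) : Ideal R) : Set R)) ∧
        s ∈ Algebra.adjoin R ((fun a => C a * X) '' ((Ideal.span (a '' Set.Icc 2 n) : Ideal R) : Set R)) ∧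
        β = r + s * (C (a 1) * X) := by
  set I : Ideal R := Ideal.span (a '' Set.Icc 2 n) with hI
  set A := Algebra.adjoin R ((fun a => C a * X) '' (I : Set R)) with hA
  have h23 : a 1 ^ 2 = a 2 * a 3 := hsq
  have ha2 : a 2 ∈ I := Ideal.subset_span ⟨2, ⟨le_refl 2, by omega⟩, rfl⟩
  have ha3 : a 3 ∈ I := Ideal.subset_span ⟨3, ⟨by omega, by omega⟩, rfl⟩
  have hx2 : (C (a 1) * X) * (C (a 1) * X) ∈ A := by
    have hC : C (a 1) * C (a 1) = C (a 2) * C (a 3) := by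
      rw [← C_mul, ← C_mul]
      congr 1
      linear_combination hsq
    have hxx : (C (a 1) * X) * (C (a 1) * X) = (C (a 2) * X) * (C (a 3) * X) := by
      linear_combination (X * X : Polynomial R) * hC
    rw [hxx]
    exact mul_mem (mem_reesAlg_of_mem ha2) (mem_reesAlg_of_mem ha3)
  have hIcc : Set.Icc 1 n = {1} ∪ Set.Icc 2 n := by
    ext m
    simp only [Set.mem_Icc, Set.mem_union, Set.mem_singleton_iff]
    omega
  have hsplit : Ideal.span (a '' Set.Icc 1 n) = Ideal.span {a 1} ⊔ I := by
    rw [hIcc, Set.image_union, Set.image_singleton, Ideal.span_union, hI]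
  intro β hβ
  refine Algebra.adjoin_induction (fun y hy => ?_) (fun r => ?_) (fun p q hp hq ihp ihq => ?_)
    (fun p q hp hq ihp ihq => ?_) hβ
  · obtain ⟨b, hb, rfl⟩ := hy
    rw [hsplit] at hb
    obtain ⟨u, hu, i, hi, rfl⟩ := Submodule.mem_sup.1 hb
    rw [Ideal.mem_span_singleton] at hu
    obtain ⟨c, rfl⟩ := hu
    refine ⟨C i * X, C c, mem_reesAlg_of_mem hi, ?_, ?_⟩
    · have := Subalgebra.algebraMap_mem A c
      simpa [Polynomial.algebraMap_eq] using this
    · show C (a 1 * c + i) * X = C i * X + C c * (C (a 1) * X)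
      rw [C_add, C_mul]
      ring
  · exact ⟨algebraMap R (Polynomial R) r, 0,
      Subalgebra.algebraMap_mem A r, zero_mem A, by ring⟩
  · obtain ⟨r, s, hr, hs, hps⟩ := ihp
    obtain ⟨r', s', hr', hs', hqs⟩ := ihq
    exact ⟨r + r', s + s', add_mem hr hr', add_mem hs hs', by rw [hps, hqs]; ring⟩
  · obtain ⟨r, s, hr, hs, hps⟩ := ihp
    obtain ⟨r', s', hr', hs', hqs⟩ := ihq
    refine ⟨r * r' + (s * s') * ((C (a 1) * X) * (C (a 1) * X)), r * s' + s * r',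
      add_mem (mul_mem hr hr') (mul_mem (mul_mem hs hs') hx2),
      add_mem (mul_mem hr hs') (mul_mem hs hr'), ?_⟩
    rw [hps, hqs]
    ring

end

/-- Let `J = (a₁, …, aₙ)` (`n ≥ 3`) be an ideal of `R` with `a₁² = a₂·a₃`,
let `I = (a₂, …, aₙ)` and assume `I` contains a non-zerodivisor. Then the Rees algebra
`𝓡 = R[It]` is strictly closed in `𝓣 = R[Jt]`: every `α ∈ 𝓣` with `α ⊗ 1 = 1 ⊗ α` in
`𝓣 ⊗_𝓡 𝓣` lies in `𝓡`. -/
theorem reesAlgebra_strictly_closed_in_reesAlgebra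
    (R : Type*) [CommRing R] (n : ℕ) (hn : 3 ≤ n) (a : ℕ → R)
    (hsq : a 1 ^ 2 = a 2 * a 3)
    (hndz : ∃ x ∈ Ideal.span (a '' Set.Icc 2 n), x ∈ nonZeroDivisors R) :
    ∀ hle : ReesAlg (Ideal.span (a '' Set.Icc 2 n)) ≤ ReesAlg (Ideal.span (a '' Set.Icc 1 n)),
      letI : Algebra (ReesAlg (Ideal.span (a '' Set.Icc 2 n)))
          (ReesAlg (Ideal.span (a '' Set.Icc 1 n))) :=
        (Subalgebra.inclusion hle).toRingHom.toAlgebra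
      ∀ α : ReesAlg (Ideal.span (a '' Set.Icc 1 n)),
        α ⊗ₜ[ReesAlg (Ideal.span (a '' Set.Icc 2 n))]
            (1 : ReesAlg (Ideal.span (a '' Set.Icc 1 n)))
          = (1 : ReesAlg (Ideal.span (a '' Set.Icc 1 n))) ⊗ₜ[ReesAlg (Ideal.span (a '' Set.Icc 2 n))] α →
        (α : Polynomial R) ∈ ReesAlg (Ideal.span (a '' Set.Icc 2 n)) := by
  intro hle
  letI inst : Algebra (ReesAlg (Ideal.span (a '' Set.Icc 2 n)))
      (ReesAlg (Ideal.span (a '' Set.Icc 1 n))) :=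
    (Subalgebra.inclusion hle).toRingHom.toAlgebra
  intro α hα
  refine strict_aux (inst := inst) (x := Polynomial.C (a 1) * Polynomial.X) ?_ ?_ ?_ α hα
  · intro γ β
    rw [show algebraMap _ _ γ = Subalgebra.inclusion hle γ from
        congrFun (congrArg _ (RingHom.algebraMap_toAlgebra (Subalgebra.inclusion hle).toRingHom)) γ,
      MulMemClass.coe_mul, Subalgebra.coe_inclusion]
  · exact rees_x2 n hn a hsq
  · exact fun β => rees_dec n hn a hsq β β.2
end

section
/- Let S = k[X1, X2, ..., Xn] (n ≥ 1) be the polynomial ring over a field k and set R = k[{X_i X_j : 1 ≤ i ≤ j ≤ n} ∪ {X_i³ : 1 ≤ i ≤ n}] ⊆ S. Then R is strictly closed (in its integral closure R̄ = S), and R ≠ R̄. -/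
open scoped TensorProduct

open MvPolynomial

/-- `R = k[{XᵢXⱼ : 1 ≤ i ≤ j ≤ n} ∪ {Xᵢ³ : 1 ≤ i ≤ n}]` inside `S = k[X₁, …, Xₙ]`. -/
noncomputable def squaresCubesAlg (k : Type*) [Field k] (n : ℕ) :
    Subalgebra k (MvPolynomial (Fin n) k) :=
  Algebra.adjoin k
    ({p | ∃ i j : Fin n, p = X i * X j} ∪ {p | ∃ i : Fin n, p = X i ^ 3})

/-!
A monomial `X^b` lies in `R` iff `|b|` is even or some `bᵢ ≥ 3`. Hence `X₀³ S ⊆ R`, so `R` and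
`S` have the same fraction field; `S` is integral over `R` (as `Xᵢ³ ∈ R`) and normal, so `S = R̄`;
and `X₀ ∉ R`.

For strict closedness, let `s ⊗ 1 = 1 ⊗ s` and suppose the support of `s` contains a bad exponent
`b`: `|b|` odd and every `bᵢ ≤ 2`. With `x_odd` the odd-degree part of `x`, the pairing
`(x, y) ↦ coeff_b (x_odd * y)` is `R`-balanced: multiplication by `XᵢXⱼ` commutes with taking odd
parts, and every term divisible by `Xᵢ³` has zero coefficient at `b`. So it induces an additive map
on `S ⊗[R] S`, which sends `s ⊗ 1` to `coeff_b s ≠ 0` but `1 ⊗ s` to `0`.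
-/

namespace MvPolynomial

theorem toSubmodule_adjoin_monomial_one {σ R : Type*} [CommSemiring R] (s : Set (σ →₀ ℕ)) :
    Subalgebra.toSubmodule (Algebra.adjoin R ((monomial · (1 : R)) '' s)) =
      restrictSupport R (AddSubmonoid.closure s) := by
  have himage : (monomial · (1 : R)) '' s = monomialOneHom R σ '' (Multiplicative.toAdd ⁻¹' s) := by
    ext; simp only [Set.mem_image, Set.mem_preimage]; rfl
  rw [Algebra.adjoin_eq_span, restrictSupport_eq_span, himage, ← MonoidHom.map_mclosure,
    ← AddSubmonoid.toSubmonoid_closure]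
  rfl

variable {σ R : Type*} [CommSemiring R]

theorem coeff_X_pow_mul_eq_zero {b : σ →₀ ℕ} {i : σ} {e : ℕ} (h : b i < e)
    (p : MvPolynomial σ R) : coeff b (X i ^ e * p) = 0 := by
  rw [X_pow_eq_monomial, coeff_monomial_mul', if_neg]
  rw [Finsupp.single_le_iff]
  omega

theorem weightedHomogeneousComponent_add_mul {M : Type*} [AddCancelCommMonoid M] {w : σ → M}
    {m : M} {p : MvPolynomial σ R} (hp : IsWeightedHomogeneous w p m) (n : M)
    (q : MvPolynomial σ R) :
    weightedHomogeneousComponent w (m + n) (p * q) = p * weightedHomogeneousComponent w n q := by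
  classical
  let := weightedGradedAlgebra R w
  simp only [← weightedDecomposition.decompose'_apply R w]
  exact DirectSum.coe_decompose_mul_add_of_left_mem (weightedHomogeneousSubmodule R w) hp

noncomputable def oddPart : MvPolynomial σ R →ₗ[R] MvPolynomial σ R :=
  weightedHomogeneousComponent (1 : σ → ZMod 2) 1

theorem weight_one_zmod_two (d : σ →₀ ℕ) : Finsupp.weight (1 : σ → ZMod 2) d = d.degree := by
  simp [Finsupp.weight_apply, Finsupp.degree_apply, Finsupp.sum]

theorem coeff_oddPart (d : σ →₀ ℕ) (p : MvPolynomial σ R) :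
    coeff d (oddPart p) = if Odd d.degree then coeff d p else 0 := by
  classical
  simp [oddPart, coeff_weightedHomogeneousComponent, weight_one_zmod_two,
    ZMod.natCast_eq_one_iff_odd]

theorem oddPart_one : oddPart (1 : MvPolynomial σ R) = 0 :=
  (isWeightedHomogeneous_one R _).weightedHomogeneousComponent_ne _ (by decide)

theorem oddPart_mul_of_even {p : MvPolynomial σ R}
    (hp : IsWeightedHomogeneous (1 : σ → ZMod 2) p 0) (q : MvPolynomial σ R) :
    oddPart (p * q) = p * oddPart q :=
  weightedHomogeneousComponent_add_mul hp 1 q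

theorem oddPart_mul_of_odd {p : MvPolynomial σ R}
    (hp : IsWeightedHomogeneous (1 : σ → ZMod 2) p 1) (q : MvPolynomial σ R) :
    oddPart (p * q) = p * weightedHomogeneousComponent (1 : σ → ZMod 2) 0 q :=
  weightedHomogeneousComponent_add_mul hp 0 q

noncomputable def oddPairing (b : σ →₀ ℕ) : MvPolynomial σ R →+ MvPolynomial σ R →+ R :=
  (AddMonoidHom.mul.compr₂ (coeffAddMonoidHom b)).comp oddPart.toAddMonoidHom

theorem oddPairing_apply (b : σ →₀ ℕ) (x y : MvPolynomial σ R) :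
    oddPairing b x y = coeff b (oddPart x * y) :=
  rfl

end MvPolynomial

theorem IsStrictlyClosedIn.of_algEquiv {R A B : Type*} [CommRing R] [CommRing A] [CommRing B]
    [Algebra R A] [Algebra R B] (e : A ≃ₐ[R] B) (h : IsStrictlyClosedIn R A) :
    IsStrictlyClosedIn R B := by
  intro s hs
  obtain ⟨r, hr⟩ := h (e.symm s) <| by
    simpa using congrArg (Algebra.TensorProduct.map (e.symm : B →ₐ[R] A) (e.symm : B →ₐ[R] A)) hs
  exact ⟨r, by rw [← e.commutes, hr, e.apply_symm_apply]⟩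

theorem IsStrictlyClosedIn.isStrictlyClosed {R S : Type*} (K : Type*) [CommRing R] [CommRing S]
    [Field K] [Algebra R S] [Algebra S K] [Algebra R K] [IsScalarTower R S K] [IsFractionRing R K]
    [IsIntegralClosure S R K] (h : IsStrictlyClosedIn R S) : IsStrictlyClosed R :=
  h.of_algEquiv <| (IsIntegralClosure.equiv R S K (integralClosure R K)).trans
    (IsLocalization.algEquiv (nonZeroDivisors R) K (FractionRing R)).mapIntegralClosure

theorem IsFractionRing.of_mul_mem_range {R S K : Type*} [CommRing R] [CommRing S] [Field K]
    [Algebra R S] [Algebra S K] [Algebra R K] [IsScalarTower R S K] [IsFractionRing S K]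
    [FaithfulSMul R S] {c : R} (hc : c ≠ 0)
    (hcS : ∀ s : S, ∃ r : R, algebraMap R S r = algebraMap R S c * s) : IsFractionRing R K := by
  have hinj : Function.Injective (algebraMap R K) := by
    rw [IsScalarTower.algebraMap_eq R S K]
    exact (IsFractionRing.injective S K).comp (FaithfulSMul.algebraMap_injective R S)
  have := (faithfulSMul_iff_algebraMap_injective R K).mpr hinj
  refine IsFractionRing.of_field R K fun z => ?_
  obtain ⟨x, y, -, rfl⟩ := IsFractionRing.div_surjective (A := S) z
  obtain ⟨a, ha⟩ := hcS x
  obtain ⟨b, hb⟩ := hcS y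
  have hc' : algebraMap S K (algebraMap R S c) ≠ 0 := by
    rw [← IsScalarTower.algebraMap_apply]
    exact (map_ne_zero_iff _ hinj).mpr hc
  refine ⟨a, b, ?_⟩
  rw [IsScalarTower.algebraMap_apply R S K a, ha, IsScalarTower.algebraMap_apply R S K b, hb,
    map_mul, map_mul, mul_div_mul_left _ _ hc']

open Finsupp

def squaresCubesExponents (σ : Type*) : AddSubmonoid (σ →₀ ℕ) where
  carrier := {b | Even b.degree ∨ ∃ i, 3 ≤ b i}
  zero_mem' := Or.inl (by simp)
  add_mem' := by
    rintro a b (ha | ⟨i, hi⟩) (hb | ⟨j, hj⟩)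
    · exact Or.inl (by simpa using ha.add hb)
    · exact Or.inr ⟨j, by simp; omega⟩
    · exact Or.inr ⟨i, by simp; omega⟩
    · exact Or.inr ⟨i, by simp; omega⟩

@[simp]
theorem mem_squaresCubesExponents {σ : Type*} {b : σ →₀ ℕ} :
    b ∈ squaresCubesExponents σ ↔ Even b.degree ∨ ∃ i, 3 ≤ b i :=
  Iff.rfl

open Pointwise in
theorem closure_squaresCubes {σ : Type*} :
    AddSubmonoid.closure ({b | ∃ i j : σ, b = single i 1 + single j 1} ∪ {b | ∃ i, b = single i 3})
      = squaresCubesExponents σ := by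
  set G := {b | ∃ i j : σ, b = single i 1 + single j 1} ∪ {b | ∃ i, b = single i 3}
  have hsq : (single · 1) '' Set.univ + (single · 1) '' Set.univ ⊆
      (AddSubmonoid.closure G : Set (σ →₀ ℕ)) := by
    rintro _ ⟨_, ⟨i, -, rfl⟩, _, ⟨j, -, rfl⟩, rfl⟩
    exact AddSubmonoid.subset_closure (Or.inl ⟨i, j, rfl⟩)
  -- an exponent of degree `2m` is a sum of `m` exponents of degree `2`
  have heven {c : σ →₀ ℕ} (hc : Even c.degree) : c ∈ AddSubmonoid.closure G := by
    obtain ⟨m, hm⟩ := hc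
    have hc : c ∈ (m + m) • (single · 1) '' (Set.univ : Set σ) := by
      rw [nsmul_single_one_image]
      exact ⟨hm, by simp⟩
    rw [← two_mul, mul_nsmul, two_nsmul] at hc
    exact AddSubmonoid.nsmul_subset hsq hc
  refine le_antisymm (AddSubmonoid.closure_le.mpr ?_) fun b hb => ?_
  · rintro _ (⟨i, j, rfl⟩ | ⟨i, rfl⟩)
    · exact Or.inl (by simp)
    · exact Or.inr ⟨i, by simp⟩
  obtain hb | ⟨i, hi⟩ := hb
  · exact heven hb
  obtain hb | ⟨m, hm⟩ := Nat.even_or_odd b.degree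
  · exact heven hb
  obtain ⟨c, rfl⟩ : ∃ c, b = c + single i 3 := le_iff_exists_add'.mp (by simpa using hi)
  refine add_mem (heven ?_) (AddSubmonoid.subset_closure (Or.inr ⟨i, rfl⟩))
  simp only [map_add, degree_single] at hm
  exact ⟨m - 1, by omega⟩

section squaresCubesAlg

variable {k : Type*} [Field k] {n : ℕ}

theorem mem_squaresCubesAlg_iff {p : MvPolynomial (Fin n) k} :
    p ∈ squaresCubesAlg k n ↔ ↑p.support ⊆ (squaresCubesExponents (Fin n) : Set (Fin n →₀ ℕ)) := by
  have hgen : squaresCubesAlg k n = Algebra.adjoin k ((monomial · (1 : k)) ''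
      ({b | ∃ i j : Fin n, b = single i 1 + single j 1} ∪ {b | ∃ i, b = single i 3})) := by
    rw [squaresCubesAlg, Set.image_union]
    congr 2 <;> ext <;> simp [X, monomial_mul, monomial_pow, eq_comm]
  rw [← Subalgebra.mem_toSubmodule, hgen, toSubmodule_adjoin_monomial_one, closure_squaresCubes,
    mem_restrictSupport_iff]

theorem X_notMem_squaresCubesAlg (i : Fin n) :
    (X i : MvPolynomial (Fin n) k) ∉ squaresCubesAlg k n := by
  classical
  rw [mem_squaresCubesAlg_iff, support_X, Finset.coe_singleton, Set.singleton_subset_iff,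
    SetLike.mem_coe, mem_squaresCubesExponents]
  rintro (h | ⟨j, hj⟩)
  · simp at h
  · rw [single_apply] at hj
    split_ifs at hj <;> omega

theorem X_pow_three_mem_squaresCubesAlg (i : Fin n) :
    (X i ^ 3 : MvPolynomial (Fin n) k) ∈ squaresCubesAlg k n :=
  Algebra.subset_adjoin (Or.inr ⟨i, rfl⟩)

theorem X_pow_three_mul_mem_squaresCubesAlg (i : Fin n) (p : MvPolynomial (Fin n) k) :
    X i ^ 3 * p ∈ squaresCubesAlg k n := by
  classical
  rw [mem_squaresCubesAlg_iff]
  intro b hb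
  obtain ⟨a, ha, c, -, rfl⟩ := Finset.mem_add.mp (support_mul _ _ hb)
  rw [X_pow_eq_monomial, support_monomial, if_neg one_ne_zero, Finset.mem_singleton] at ha
  exact Or.inr ⟨i, by simp [ha]⟩

instance : Algebra.IsIntegral (squaresCubesAlg k n) (MvPolynomial (Fin n) k) where
  isIntegral p := by
    induction p using MvPolynomial.induction_on with
    | C c => exact (isIntegral_algebraMap (R := k)).tower_top
    | add p q hp hq => exact hp.add hq
    | mul_X p i hp =>
      exact hp.mul <| IsIntegral.of_pow three_pos <| isIntegral_algebraMap
        (x := (⟨_, X_pow_three_mem_squaresCubesAlg i⟩ : squaresCubesAlg k n))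

theorem squaresCubesAlg_isFractionRing (hn : 1 ≤ n) (K : Type*) [Field K]
    [Algebra (MvPolynomial (Fin n) k) K] [IsFractionRing (MvPolynomial (Fin n) k) K] :
    IsFractionRing (squaresCubesAlg k n) K := by
  let i : Fin n := ⟨0, hn⟩
  refine IsFractionRing.of_mul_mem_range (S := MvPolynomial (Fin n) k)
    (c := ⟨_, X_pow_three_mem_squaresCubesAlg i⟩) ?_
    fun p => ⟨⟨_, X_pow_three_mul_mem_squaresCubesAlg i p⟩, rfl⟩
  exact fun h => pow_ne_zero 3 (X_ne_zero i) (congrArg Subtype.val h)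

theorem oddPairing_mul_left_eq {b : Fin n →₀ ℕ} (hb : ∀ i, b i < 3)
    {r : MvPolynomial (Fin n) k} (hr : r ∈ squaresCubesAlg k n) (x y : MvPolynomial (Fin n) k) :
    oddPairing b (r * x) y = oddPairing b x (r * y) := by
  simp only [oddPairing_apply]
  induction hr using Algebra.adjoin_induction generalizing x y with
  | mem q hq =>
    obtain ⟨i, j, rfl⟩ | ⟨i, rfl⟩ := hq
    · have h : IsWeightedHomogeneous (1 : Fin n → ZMod 2) (X i * X j : MvPolynomial (Fin n) k) 0 :=
        (isWeightedHomogeneous_X k 1 i).mul (isWeightedHomogeneous_X k 1 j)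
      rw [oddPart_mul_of_even h]
      ring_nf
    · have h : IsWeightedHomogeneous (1 : Fin n → ZMod 2) (X i ^ 3 : MvPolynomial (Fin n) k) 1 :=
        (isWeightedHomogeneous_X k 1 i).pow 3
      rw [oddPart_mul_of_odd h, mul_assoc, mul_left_comm (oddPart x),
        coeff_X_pow_mul_eq_zero (hb i), coeff_X_pow_mul_eq_zero (hb i)]
  | algebraMap c =>
    simp only [algebraMap_eq, ← smul_eq_C_mul, map_smul, smul_mul_assoc, mul_smul_comm, coeff_smul]
  | add p q _ _ hp hq =>
    simp only [add_mul, map_add, coeff_add, mul_add, hp, hq]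
  | mul p q _ _ hp hq =>
    rw [mul_assoc, hp, hq, mul_left_comm q, mul_assoc]

theorem squaresCubesAlg_isStrictlyClosedIn :
    IsStrictlyClosedIn (squaresCubesAlg k n) (MvPolynomial (Fin n) k) := by
  intro s hs
  suffices s ∈ squaresCubesAlg k n from ⟨⟨s, this⟩, rfl⟩
  rw [mem_squaresCubesAlg_iff]
  intro b hb
  by_contra hbad
  simp only [SetLike.mem_coe, mem_squaresCubesExponents, not_or, not_exists, not_le,
    Nat.not_even_iff_odd] at hbad
  obtain ⟨hodd, hb3⟩ := hbad
  have hpair := congrArg (TensorProduct.liftAddHom (oddPairing b) fun r x y => by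
    simpa only [Subalgebra.smul_def, smul_eq_mul] using oddPairing_mul_left_eq hb3 r.2 x y) hs
  simp only [TensorProduct.liftAddHom_tmul, oddPairing_apply, mul_one, coeff_oddPart, if_pos hodd,
    oddPart_one, zero_mul, coeff_zero] at hpair
  exact MvPolynomial.mem_support_iff.mp hb hpair

theorem squaresCubesAlg_isStrictlyClosed (hn : 1 ≤ n) : IsStrictlyClosed (squaresCubesAlg k n) :=
  have := squaresCubesAlg_isFractionRing (k := k) hn (FractionRing (MvPolynomial (Fin n) k))
  squaresCubesAlg_isStrictlyClosedIn.isStrictlyClosed (FractionRing (MvPolynomial (Fin n) k))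

end squaresCubesAlg

/-- Let `S = k[X₁, …, Xₙ]` (`n ≥ 1`) and
`R = k[{XᵢXⱼ}, {Xᵢ³}] ⊆ S`.  Then the fraction field of `S` is a fraction field of `R`, the
integral closure `R̄` of `R` in it is `S`, `R` is strictly closed, and `R ≠ R̄ = S`. -/
theorem squaresCubesAlg_strictlyClosed_ne_closure
    (k : Type*) [Field k] (n : ℕ) (hn : 1 ≤ n)
    (K : Type*) [Field K] [Algebra (MvPolynomial (Fin n) k) K]
    [IsFractionRing (MvPolynomial (Fin n) k) K] :
    (letI : Algebra (squaresCubesAlg k n) K :=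
      ((algebraMap (MvPolynomial (Fin n) k) K).comp
        (squaresCubesAlg k n).val.toRingHom).toAlgebra
     IsFractionRing (squaresCubesAlg k n) K ∧
       (integralClosure (squaresCubesAlg k n) K : Set K)
         = Set.range (algebraMap (MvPolynomial (Fin n) k) K)) ∧
    IsStrictlyClosed (squaresCubesAlg k n) ∧
    squaresCubesAlg k n ≠ ⊤ := by
  refine ⟨?_, squaresCubesAlg_isStrictlyClosed hn,
    fun htop => X_notMem_squaresCubesAlg (k := k) ⟨0, hn⟩ (htop ▸ Algebra.mem_top)⟩
  rw [show ((algebraMap (MvPolynomial (Fin n) k) K).comp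
      (squaresCubesAlg k n).val.toRingHom).toAlgebra = Subalgebra.toAlgebra (squaresCubesAlg k n)
      from Algebra.algebra_ext _ _ fun _ => rfl]
  exact ⟨squaresCubesAlg_isFractionRing hn K, Set.ext fun _ => IsIntegralClosure.isIntegral_iff⟩
end

section
/- Let S = k[X, Y] be the polynomial ring over a field k and set R₂ = k[X², X²Y, Y², X³, Y³] ⊆ S. Then S is the integral closure of R₂ in its field of fractions, and R₂ is not a weakly Arf ring: X² is a non-zerodivisor of R₂ with X³/X² ∈ S and X²Y/X² ∈ S, but (X³·X²Y)/X² = X³Y ∉ R₂. Consequently R₂ is not strictly closed. -/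
open scoped TensorProduct

open MvPolynomial

/-- `R₂ = k[X², X²Y, Y², X³, Y³]` inside `S = k[X, Y]`. -/
noncomputable def R₂alg (k : Type*) [Field k] : Subalgebra k (MvPolynomial (Fin 2) k) :=
  Algebra.adjoin k {X 0 ^ 2, X 0 ^ 2 * X 1, X 1 ^ 2, X 0 ^ 3, X 1 ^ 3}

/-!
Since `X², Y² ∈ R₂`, the polynomial ring `S` is integral over `R₂`, and `X²Y²·S ⊆ R₂`, so `R₂` and
`S` share their fraction field; as `S` is integrally closed, it is the integral closure of `R₂`
there. The fractions `X³/X²` and `X²Y/X²` are integral over `R₂` because their squares `X²` and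
`Y²` lie in `R₂`, but `X³Y` is not in `R₂`: every monomial of `R₂` has its exponent in the additive
monoid generated by the exponents of the five generators, and `(3,1)` is not in it. Strictly
closed rings are weakly Arf, so `R₂` is not strictly closed either.
-/

theorem pow_mem_of_sq_mem_of_cube_mem {M S : Type*} [Monoid M] [SetLike S M] [SubmonoidClass S M]
    {T : S} {x : M} (h2 : x ^ 2 ∈ T) (h3 : x ^ 3 ∈ T) {n : ℕ} (hn : 2 ≤ n) : x ^ n ∈ T := by
  obtain ⟨m, rfl | rfl⟩ := Nat.even_or_odd' n
  · rw [pow_mul]; exact pow_mem h2 m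
  · obtain ⟨l, rfl⟩ : ∃ l, m = l + 1 := ⟨m - 1, by omega⟩
    rw [show 2 * (l + 1) + 1 = 2 * l + 3 by ring, pow_add, pow_mul]
    exact mul_mem (pow_mem h2 l) h3

namespace MvPolynomial

variable {σ : Type*} (R : Type*) [CommSemiring R]

def subalgebraOfExponents (M : AddSubmonoid (σ →₀ ℕ)) : Subalgebra R (MvPolynomial σ R) where
  carrier := {p | ↑p.support ⊆ (M : Set (σ →₀ ℕ))}
  mul_mem' {p q} hp hq := by
    classical
    intro d hd
    obtain ⟨a, ha, b, hb, rfl⟩ := Finset.mem_add.mp (support_mul p q hd)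
    exact M.add_mem (hp ha) (hq hb)
  add_mem' {p q} hp hq := by
    classical
    intro d hd
    exact (Finset.mem_union.mp (support_add hd)).elim (fun h => hp h) (fun h => hq h)
  algebraMap_mem' a := by
    classical
    intro d hd
    rw [algebraMap_eq, Finset.mem_coe, support_C] at hd
    split_ifs at hd
    · simp at hd
    · rw [Finset.mem_singleton.mp hd]; exact M.zero_mem

theorem monomial_one_mem_subalgebraOfExponents_iff [Nontrivial R] {M : AddSubmonoid (σ →₀ ℕ)}
    {d : σ →₀ ℕ} : monomial d (1 : R) ∈ subalgebraOfExponents R M ↔ d ∈ M := by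
  classical
  change ↑(monomial d (1 : R)).support ⊆ (M : Set (σ →₀ ℕ)) ↔ d ∈ M
  rw [support_monomial, if_neg one_ne_zero, Finset.coe_singleton, Set.singleton_subset_iff,
    SetLike.mem_coe]

theorem X_pow_mul_X_pow_eq_monomial (a b : σ) (i j : ℕ) :
    (X a ^ i * X b ^ j : MvPolynomial σ R) =
      monomial (Finsupp.single a i + Finsupp.single b j) 1 := by
  rw [X_pow_eq_monomial, X_pow_eq_monomial, monomial_mul, one_mul]

end MvPolynomial

theorem Subalgebra.isIntegral_of_pow_mem {k A : Type*} [CommRing k] [CommRing A] [Algebra k A]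
    (T : Subalgebra k A) {s : Set A} (hs : Algebra.adjoin k s = ⊤)
    (h : ∀ x ∈ s, ∃ n, 0 < n ∧ x ^ n ∈ T) : Algebra.IsIntegral T A := by
  suffices ⊤ ≤ (integralClosure T A).restrictScalars k from ⟨fun a => this trivial⟩
  rw [← hs, Algebra.adjoin_le_iff]
  intro x hx
  obtain ⟨n, hn, hxn⟩ := h x hx
  exact IsIntegral.of_pow hn (isIntegral_algebraMap (x := (⟨x ^ n, hxn⟩ : T)))

section Conductor

variable {T S K : Type*} [CommRing T] [CommRing S] [Field K] [Algebra T S] [Algebra S K]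
  [Algebra T K] [IsScalarTower T S K] [IsFractionRing S K]

theorem IsFractionRing.of_mul_mem_range_s10 (hinj : Function.Injective (algebraMap T S))
    {c : S} (hc : c ≠ 0) (hcS : ∀ s, c * s ∈ (algebraMap T S).range) : IsFractionRing T K := by
  have : FaithfulSMul T K := (faithfulSMul_iff_algebraMap_injective T K).mpr <| by
    rw [IsScalarTower.algebraMap_eq T S K]
    exact (IsFractionRing.injective S K).comp hinj
  refine IsFractionRing.of_field T K fun z => ?_
  obtain ⟨n, d, -, rfl⟩ := IsFractionRing.div_surjective (A := S) z
  obtain ⟨n', hn'⟩ := hcS n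
  obtain ⟨d', hd'⟩ := hcS d
  refine ⟨n', d', ?_⟩
  have hc' : algebraMap S K c ≠ 0 := by simpa using hc
  rw [IsScalarTower.algebraMap_apply T S K, IsScalarTower.algebraMap_apply T S K, hn', hd',
    map_mul, map_mul, mul_div_mul_left _ _ hc']

theorem integralClosure_eq_range_of_isIntegral [IsIntegrallyClosed S]
    [Algebra.IsIntegral T S] : (integralClosure T K : Set K) = Set.range (algebraMap S K) := by
  ext x
  refine ⟨fun hx => IsIntegrallyClosed.isIntegral_iff.mp (IsIntegral.tower_top (A := S) hx), ?_⟩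
  rintro ⟨s, rfl⟩
  exact (Algebra.IsIntegral.isIntegral s).map (IsScalarTower.toAlgHom T S K)

end Conductor

theorem AlgHom.apply_mul_algebraMap_eq {R A B : Type*} [CommRing R] [CommRing A] [CommRing B]
    [Algebra R A] [Algebra R B] (f g : A →ₐ[R] B) {a b : A} {x y z : R}
    (ha : a * algebraMap R A x = algebraMap R A y) (hb : b * algebraMap R A x = algebraMap R A z) :
    f (a * algebraMap R A z) = g (a * algebraMap R A z) := by
  have hfa := congrArg f ha
  have hga := congrArg g ha
  have hgb := congrArg g hb
  simp only [map_mul, AlgHom.commutes] at hfa hga hgb ⊢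
  linear_combination (g a - f a) * hgb + g b * hfa - g b * hga

theorem IsStrictlyClosed.isWeaklyArf {R : Type*} [CommRing R] (h : IsStrictlyClosed R) :
    IsWeaklyArf R := by
  rintro x y z - ⟨u, hu, hux⟩ ⟨v, hv, hvx⟩
  set A := integralClosure R (FractionRing R)
  have ha : (⟨u, hu⟩ : A) * algebraMap R A x = algebraMap R A y := Subtype.ext hux
  have hb : (⟨v, hv⟩ : A) * algebraMap R A x = algebraMap R A z := Subtype.ext hvx
  obtain ⟨r, hr⟩ := h _ (AlgHom.apply_mul_algebraMap_eq (B := A ⊗[R] A)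
    Algebra.TensorProduct.includeLeft Algebra.TensorProduct.includeRight ha hb)
  refine ⟨r, ?_⟩
  rw [show algebraMap R _ r = u * algebraMap R _ z from congrArg Subtype.val hr, map_mul,
    mul_right_comm, hux]

theorem IsLocalization.mk'_mem_integralClosure_of_mul_self_eq {R L : Type*} [CommRing R]
    [CommRing L] [Algebra R L] {M : Submonoid R} [IsLocalization M L] {y c : R} {x : M}
    (h : y * y = x * x * c) : IsLocalization.mk' L y x ∈ integralClosure R L := by
  refine IsIntegral.of_pow two_pos ?_
  have hsq : IsLocalization.mk' L y x ^ 2 = algebraMap R L c := by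
    rw [sq, ← IsLocalization.mk'_mul, IsLocalization.mk'_eq_iff_eq_mul, ← map_mul, h,
      Submonoid.coe_mul, mul_comm]
  rw [hsq]
  exact isIntegral_algebraMap

theorem IsWeaklyArf.exists_mul_eq {R : Type*} [CommRing R] (h : IsWeaklyArf R) {x y z a b : R}
    (hx : x ∈ nonZeroDivisors R) (hy : y * y = x * x * a) (hz : z * z = x * x * b) :
    ∃ r, r * x = y * z := by
  obtain ⟨r, hr⟩ := h x y z hx
    ⟨_, IsLocalization.mk'_mem_integralClosure_of_mul_self_eq (x := ⟨x, hx⟩) hy,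
      IsLocalization.mk'_spec _ _ _⟩
    ⟨_, IsLocalization.mk'_mem_integralClosure_of_mul_self_eq (x := ⟨x, hx⟩) hz,
      IsLocalization.mk'_spec _ _ _⟩
  exact ⟨r, IsFractionRing.injective R (FractionRing R) (by rwa [map_mul])⟩

namespace R₂alg

-- The additive monoid generated by (2,0), (2,1), (0,2), (3,0), (0,3); it misses (3,1).
def exponents : AddSubmonoid (Fin 2 →₀ ℕ) where
  carrier := {d | d 0 ≠ 1 ∧ (d 1 = 1 → d 0 = 2 ∨ 4 ≤ d 0)}
  add_mem' {d e} hd he := by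
    simp only [Set.mem_ofPred_eq, Finsupp.add_apply] at hd he ⊢
    omega
  zero_mem' := by simp

theorem single_add_single_mem_exponents_iff {i j : ℕ} :
    Finsupp.single 0 i + Finsupp.single 1 j ∈ exponents ↔ i ≠ 1 ∧ (j = 1 → i = 2 ∨ 4 ≤ i) := by
  simp [exponents]

variable (k : Type*) [Field k]

theorem X_zero_sq_mem : (X 0 ^ 2 : MvPolynomial (Fin 2) k) ∈ R₂alg k :=
  Algebra.subset_adjoin (by simp)
theorem X_zero_sq_mul_X_one_mem : (X 0 ^ 2 * X 1 : MvPolynomial (Fin 2) k) ∈ R₂alg k :=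
  Algebra.subset_adjoin (by simp)
theorem X_one_sq_mem : (X 1 ^ 2 : MvPolynomial (Fin 2) k) ∈ R₂alg k :=
  Algebra.subset_adjoin (by simp)
theorem X_zero_cube_mem : (X 0 ^ 3 : MvPolynomial (Fin 2) k) ∈ R₂alg k :=
  Algebra.subset_adjoin (by simp)
theorem X_one_cube_mem : (X 1 ^ 3 : MvPolynomial (Fin 2) k) ∈ R₂alg k :=
  Algebra.subset_adjoin (by simp)

theorem X_pow_mul_X_pow_mem {i j : ℕ} (hi : 2 ≤ i) (hj : 2 ≤ j) :
    (X 0 ^ i * X 1 ^ j : MvPolynomial (Fin 2) k) ∈ R₂alg k :=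
  mul_mem (pow_mem_of_sq_mem_of_cube_mem (X_zero_sq_mem k) (X_zero_cube_mem k) hi)
    (pow_mem_of_sq_mem_of_cube_mem (X_one_sq_mem k) (X_one_cube_mem k) hj)

theorem X_pow_mul_X_pow_mul_mem (p : MvPolynomial (Fin 2) k) :
    ∀ {i j : ℕ}, 2 ≤ i → 2 ≤ j → X 0 ^ i * X 1 ^ j * p ∈ R₂alg k := by
  induction p using MvPolynomial.induction_on with
  | C a =>
    intro i j hi hj
    rw [mul_comm, ← smul_eq_C_mul]
    exact Subalgebra.smul_mem _ (X_pow_mul_X_pow_mem k hi hj) a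
  | add p q hp hq =>
    intro i j hi hj
    rw [mul_add]; exact add_mem (hp hi hj) (hq hi hj)
  | mul_X p n hp =>
    intro i j hi hj
    obtain rfl | rfl : n = 0 ∨ n = 1 := by omega
    · convert hp (i := i + 1) (by omega) hj using 1; ring
    · convert hp (j := j + 1) hi (by omega) using 1; ring

theorem le_subalgebraOfExponents : R₂alg k ≤ subalgebraOfExponents k exponents := by
  refine Algebra.adjoin_le fun p hp => ?_
  have monomial_mem : ∀ i j : ℕ, i ≠ 1 → (j = 1 → i = 2 ∨ 4 ≤ i) →
      (X 0 ^ i * X 1 ^ j : MvPolynomial (Fin 2) k) ∈ subalgebraOfExponents k exponents :=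
    fun i j hi hj => by
      rw [X_pow_mul_X_pow_eq_monomial, monomial_one_mem_subalgebraOfExponents_iff,
        single_add_single_mem_exponents_iff]
      exact ⟨hi, hj⟩
  simp only [Set.mem_insert_iff, Set.mem_singleton_iff] at hp
  rcases hp with rfl | rfl | rfl | rfl | rfl
  · simpa using monomial_mem 2 0 (by norm_num) (by norm_num)
  · simpa using monomial_mem 2 1 (by norm_num) (by norm_num)
  · simpa using monomial_mem 0 2 (by norm_num) (by norm_num)
  · simpa using monomial_mem 3 0 (by norm_num) (by norm_num)
  · simpa using monomial_mem 0 3 (by norm_num) (by norm_num)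

theorem X_zero_cube_mul_X_one_not_mem : (X 0 ^ 3 * X 1 : MvPolynomial (Fin 2) k) ∉ R₂alg k := by
  intro h
  have := le_subalgebraOfExponents k h
  rw [← pow_one (X 1), X_pow_mul_X_pow_eq_monomial, monomial_one_mem_subalgebraOfExponents_iff,
    single_add_single_mem_exponents_iff] at this
  omega

theorem isIntegral : Algebra.IsIntegral (R₂alg k) (MvPolynomial (Fin 2) k) := by
  refine Subalgebra.isIntegral_of_pow_mem _ (adjoin_range_X (σ := Fin 2) (R := k)) ?_
  rintro _ ⟨i, rfl⟩
  obtain rfl | rfl : i = 0 ∨ i = 1 := by omega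
  exacts [⟨2, two_pos, X_zero_sq_mem k⟩, ⟨2, two_pos, X_one_sq_mem k⟩]

theorem not_isWeaklyArf : ¬ IsWeaklyArf (R₂alg k) := by
  intro h
  have hX : (X 0 ^ 2 : MvPolynomial (Fin 2) k) ≠ 0 := pow_ne_zero _ (X_ne_zero 0)
  let x : R₂alg k := ⟨X 0 ^ 2, X_zero_sq_mem k⟩
  obtain ⟨r, hr⟩ := h.exists_mul_eq (y := ⟨X 0 ^ 3, X_zero_cube_mem k⟩)
    (z := ⟨X 0 ^ 2 * X 1, X_zero_sq_mul_X_one_mem k⟩) (a := x) (b := ⟨X 1 ^ 2, X_one_sq_mem k⟩)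
    (mem_nonZeroDivisors_of_ne_zero (x := x) (ne_of_apply_ne Subtype.val hX))
    (Subtype.ext (by simp only [x, MulMemClass.mk_mul_mk]; ring))
    (Subtype.ext (by simp only [x, MulMemClass.mk_mul_mk]; ring))
  have hr' : (r : MvPolynomial (Fin 2) k) = X 0 ^ 3 * X 1 := by
    have hr_val := congrArg Subtype.val hr
    simp only [MulMemClass.coe_mul] at hr_val
    exact mul_right_cancel₀ hX (by linear_combination hr_val)
  exact X_zero_cube_mul_X_one_not_mem k (hr' ▸ r.2)

end R₂alg

/-- Let `S = k[X, Y]` and `R₂ = k[X², X²Y, Y², X³, Y³] ⊆ S`.  Then the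
fraction field of `S` is a fraction field of `R₂` and `S` is the integral closure of `R₂` in
it.  Moreover `R₂` is not weakly Arf: `X²`, `X³` and `X²Y` belong to `R₂`, `X²` is a
non-zerodivisor, `X³/X² = X ∈ S` and `X²Y/X² = Y ∈ S`, but
`(X³·X²Y)/X² = X³Y ∉ R₂`.  Consequently `R₂` is not strictly closed. -/
theorem R₂alg_not_weaklyArf
    (k : Type*) [Field k]
    (K : Type*) [Field K] [Algebra (MvPolynomial (Fin 2) k) K]
    [IsFractionRing (MvPolynomial (Fin 2) k) K] :
    (letI : Algebra (R₂alg k) K :=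
      ((algebraMap (MvPolynomial (Fin 2) k) K).comp (R₂alg k).val.toRingHom).toAlgebra
     IsFractionRing (R₂alg k) K ∧
       (integralClosure (R₂alg k) K : Set K)
         = Set.range (algebraMap (MvPolynomial (Fin 2) k) K)) ∧
    ((X 0 ^ 2 : MvPolynomial (Fin 2) k) ∈ R₂alg k ∧
      (X 0 ^ 3 : MvPolynomial (Fin 2) k) ∈ R₂alg k ∧
      (X 0 ^ 2 * X 1 : MvPolynomial (Fin 2) k) ∈ R₂alg k ∧
      (X 0 ^ 2 : MvPolynomial (Fin 2) k) ∈ nonZeroDivisors (MvPolynomial (Fin 2) k) ∧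
      (X 0 ^ 3 * (X 0 ^ 2 * X 1) : MvPolynomial (Fin 2) k) = X 0 ^ 2 * (X 0 ^ 3 * X 1) ∧
      (X 0 ^ 3 * X 1 : MvPolynomial (Fin 2) k) ∉ R₂alg k) ∧
    ¬ IsWeaklyArf (R₂alg k) ∧
    ¬ IsStrictlyClosed (R₂alg k) := by
  refine ⟨?_, ⟨R₂alg.X_zero_sq_mem k, R₂alg.X_zero_cube_mem k, R₂alg.X_zero_sq_mul_X_one_mem k,
      mem_nonZeroDivisors_of_ne_zero (pow_ne_zero _ (X_ne_zero 0)), by ring,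
      R₂alg.X_zero_cube_mul_X_one_not_mem k⟩, R₂alg.not_isWeaklyArf k,
      fun h => R₂alg.not_isWeaklyArf k h.isWeaklyArf⟩
  let _ : Algebra (R₂alg k) K :=
    ((algebraMap (MvPolynomial (Fin 2) k) K).comp (R₂alg k).val.toRingHom).toAlgebra
  have : @IsScalarTower (R₂alg k) (MvPolynomial (Fin 2) k) K Algebra.toSMul Algebra.toSMul
      Algebra.toSMul := .of_algebraMap_eq' rfl
  have := R₂alg.isIntegral k
  refine ⟨IsFractionRing.of_mul_mem_range_s10 Subtype.val_injective
    (mul_ne_zero (pow_ne_zero 2 (X_ne_zero 0)) (pow_ne_zero 2 (X_ne_zero 1)))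
    fun p => ⟨⟨_, R₂alg.X_pow_mul_X_pow_mul_mem k p le_rfl le_rfl⟩, rfl⟩,
    integralClosure_eq_range_of_isIntegral⟩
end

section
/- Let R be a commutative ring, let 𝔭₁, ..., 𝔭_ℓ (ℓ ≥ 2) be ideals of R, and let T = R/𝔭₁ × R/𝔭₂ × ... × R/𝔭_ℓ be the product ring, regarded as an R-algebra via the diagonal map a ↦ (ā, ā, ..., ā). For an element α = (ᾱ₁, ᾱ₂, ..., ᾱ_ℓ) ∈ T with α_i ∈ R, one has α ⊗ 1 = 1 ⊗ α in T ⊗_R T if and only if α_i − α_j ∈ 𝔭_i + 𝔭_j for all 1 ≤ i, j ≤ ℓ. -/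
open scoped TensorProduct

/-- Let `R` be a commutative ring, `𝔭₁, …, 𝔭_ℓ` (`ℓ ≥ 2`) ideals of `R` and
`T = R/𝔭₁ × ⋯ × R/𝔭_ℓ`, viewed as an `R`-algebra via the diagonal map `a ↦ (ā, …, ā)` (this
is the canonical `R`-algebra structure on the product).  For `α = (ᾱ₁, …, ᾱ_ℓ) ∈ T` with
`αᵢ ∈ R`, one has `α ⊗ 1 = 1 ⊗ α` in `T ⊗_R T` if and only if `αᵢ - αⱼ ∈ 𝔭ᵢ + 𝔭ⱼ` for all
`i, j`. -/
theorem tmul_comm_iff_sub_mem_sup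
    (R : Type*) [CommRing R] (ℓ : ℕ) (hℓ : 2 ≤ ℓ)
    (p : Fin ℓ → Ideal R) (α : Fin ℓ → R) :
    ((fun i => Ideal.Quotient.mk (p i) (α i)) : ∀ i, R ⧸ p i) ⊗ₜ[R]
          (1 : ∀ i, R ⧸ p i)
        = (1 : ∀ i, R ⧸ p i) ⊗ₜ[R]
          ((fun i => Ideal.Quotient.mk (p i) (α i)) : ∀ i, R ⧸ p i)
      ↔ ∀ i j, α i - α j ∈ p i + p j := by
  constructor
  · intro h i j
    set q : Ideal R := p i ⊔ p j with hq
    have hfi : p i ≤ q.comap (AlgHom.id R R) := le_sup_left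
    have hfj : p j ≤ q.comap (AlgHom.id R R) := le_sup_right
    let f : (∀ k, R ⧸ p k) →ₐ[R] R ⧸ q :=
      (Ideal.quotientMapₐ q (AlgHom.id R R) hfi).comp (Pi.evalAlgHom R (fun k => R ⧸ p k) i)
    let g : (∀ k, R ⧸ p k) →ₐ[R] R ⧸ q :=
      (Ideal.quotientMapₐ q (AlgHom.id R R) hfj).comp (Pi.evalAlgHom R (fun k => R ⧸ p k) j)
    let Φ := Algebra.TensorProduct.lift f g (fun x y => Commute.all _ _)
    have h2 := congrArg Φ h
    simp only [Φ, Algebra.TensorProduct.lift_tmul, map_one, one_mul, mul_one, f, g,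
      AlgHom.comp_apply, Pi.evalAlgHom_apply, Ideal.quotient_map_mkₐ, AlgHom.id_apply,
      Ideal.Quotient.mkₐ_eq_mk] at h2
    rw [Submodule.add_eq_sup, ← hq, ← Ideal.Quotient.mk_eq_mk_iff_sub_mem]
    exact h2
  · intro h
    set e : Fin ℓ → (∀ k, R ⧸ p k) := fun k => Pi.single k 1 with he
    have h1 : (1 : ∀ k, R ⧸ p k) = ∑ k, e k := by
      funext m
      simp [he, Finset.sum_apply, Pi.single_apply]
    have hα : ((fun i => Ideal.Quotient.mk (p i) (α i)) : ∀ i, R ⧸ p i)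
        = ∑ k, α k • e k := by
      funext m
      have : ∀ k, (α k • e k) m = if k = m then Ideal.Quotient.mk (p m) (α m) else 0 := by
        intro k
        rcases eq_or_ne k m with rfl | hkm
        · simp [he, Algebra.smul_def, Ideal.Quotient.algebraMap_eq]
        · simp [he, Pi.single_apply, hkm]
      simp [Finset.sum_apply, this]
    have hsmul : ∀ (k : Fin ℓ) (a : R), a ∈ p k → a • e k = 0 := by
      intro k a ha
      funext m
      rcases eq_or_ne k m with rfl | hkm
      · simp [he, Algebra.smul_def, Ideal.Quotient.algebraMap_eq,
          Ideal.Quotient.eq_zero_iff_mem.mpr ha]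
      · simp [he, Pi.single_apply, hkm]
    have key : ∀ k m, α k • (e k ⊗ₜ[R] e m) = α m • (e k ⊗ₜ[R] e m) := by
      intro k m
      have hmem : α k - α m ∈ p k ⊔ p m := by
        rw [← Submodule.add_eq_sup]; exact h k m
      obtain ⟨a, ha, b, hb, hab⟩ := Submodule.mem_sup.mp hmem
      have ha0 : a • (e k ⊗ₜ[R] e m) = 0 := by
        rw [TensorProduct.smul_tmul' a, hsmul k a ha, TensorProduct.zero_tmul]
      have hb0 : b • (e k ⊗ₜ[R] e m) = 0 := by
        rw [← TensorProduct.tmul_smul b, hsmul m b hb, TensorProduct.tmul_zero]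
      have hk : α k = α m + (a + b) := by rw [hab]; ring
      rw [hk, add_smul, add_smul, ha0, hb0, add_zero, add_zero]
    rw [hα, h1, TensorProduct.sum_tmul, TensorProduct.sum_tmul]
    simp_rw [TensorProduct.tmul_sum]
    refine Finset.sum_congr rfl fun k _ => Finset.sum_congr rfl fun m _ => ?_
    rw [← TensorProduct.smul_tmul', key k m, ← TensorProduct.tmul_smul]
end

section
/- Let (R, 𝔪) be a local ring (not necessarily Noetherian) and let R̄ be the integral closure of R in its total ring of fractions Q(R). If 𝔪·R̄ ⊆ R, then R is a weakly Arf ring. -/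
/-- Let `(R, 𝔪)` be a local ring (not necessarily Noetherian) and `R̄` the
integral closure of `R` in its total ring of fractions `Q(R)`.  If `𝔪·R̄ ⊆ R`, then `R` is a
weakly Arf ring. -/
theorem isWeaklyArf_of_maximalIdeal_mul_integralClosure_le
    (R : Type*) [CommRing R] [IsLocalRing R]
    (h : ∀ a ∈ IsLocalRing.maximalIdeal R, ∀ u ∈ integralClosure R (FractionRing R),
      algebraMap R (FractionRing R) a * u ∈ (algebraMap R (FractionRing R)).range) :
    IsWeaklyArf R := by
  rintro x y z hx ⟨u, hu, huy⟩ ⟨v, hv, hvz⟩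
  by_cases hxu : IsUnit x
  · obtain ⟨w, hw⟩ := hxu.exists_right_inv
    refine ⟨w * y * z, ?_⟩
    rw [← map_mul]
    congr 1
    linear_combination y * z * hw
  · obtain ⟨r, hr⟩ := h x (IsLocalRing.mem_maximalIdeal x |>.mpr hxu) (u * v)
      (mul_mem hu hv)
    refine ⟨r, ?_⟩
    rw [hr, map_mul, ← huy, ← hvz]
    ring
end
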